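/- arXiv:2603.04561 — 2 statements merged into one kernel-verified Lean document; each statement's English description precedes it below -/
import Mathlib

section
/- For all i, j ∈ {1,...,2r} and all k ≥ 0, the invariant I_k commutes with M_{ij}⊗1 + 1⊗M_{ij} in Cl ⊗ Cl, where M_{ij} := (1/4)(Γ_iΓ_j − Γ_jΓ_i); that is, (M_{ij}⊗1 + 1⊗M_{ij})·I_k = I_k·(M_{ij}⊗1 + 1⊗M_{ij}). -/
open scoped TensorProduct

noncomputable section

/-- The quadratic form `x₁² + ⋯ + x_{2r}²` on `ℂ^{2r}`. -/
def Qf (r : ℕ) : QuadraticForm ℂ (Fin (2*r) → ℂ) :=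
  QuadraticMap.weightedSumSquares ℂ (fun _ : Fin (2*r) => (1:ℂ))

/-- The Clifford algebra of `Qf r`. -/
abbrev Cl (r : ℕ) := CliffordAlgebra (Qf r)

/-- The generators `Γ_i`. -/
def Γgen (r : ℕ) (i : Fin (2*r)) : Cl r :=
  CliffordAlgebra.ι (Qf r) (Pi.single i 1)

/-- The antisymmetrised products `Γ_{[i₁…i_k]}`. -/
def Γbr (r k : ℕ) (i : Fin k → Fin (2*r)) : Cl r :=
  ((k.factorial : ℂ))⁻¹ •
    ∑ σ : Equiv.Perm (Fin k),
      ((Equiv.Perm.sign σ : ℤ) : ℂ) • (List.ofFn fun j => Γgen r (i (σ j))).prod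

/-- The invariants `I_k ∈ Cl ⊗ Cl`. -/
def Ik (r k : ℕ) : Cl r ⊗[ℂ] Cl r :=
  ∑ i : Fin k → Fin (2*r), (Γbr r k i) ⊗ₜ[ℂ] (Γbr r k i)

/-- The split Casimir element `Ĉ = −I₂/(16(2r−2))`. -/
def sC (r : ℕ) : Cl r ⊗[ℂ] Cl r := (-(16*(2*(r:ℂ)-2))⁻¹) • Ik r 2

/-- The top element `Γ_{2r+1} = (−i)^r Γ₁⋯Γ_{2r}`. -/
def Γtop (r : ℕ) : Cl r :=
  ((-Complex.I)^r) • (List.ofFn fun i : Fin (2*r) => Γgen r i).prod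

/-- The chirality projector `p_ε = (1 + ε Γ_{2r+1})/2`. -/
def pCh (r : ℕ) (ε : ℂ) : Cl r := (2:ℂ)⁻¹ • (1 + ε • Γtop r)

/-- The chirality projectors `p_{εε'} = p_ε ⊗ p_{ε'}`. -/
def ppCh (r : ℕ) (ε ε' : ℂ) : Cl r ⊗[ℂ] Cl r := (pCh r ε) ⊗ₜ[ℂ] (pCh r ε')

/-- The eigenvalues `c_k = (2k(2r−k) − r(2r−1))/(16(r−1))`. -/
def cEv (r k : ℕ) : ℂ :=
  (2*(k:ℂ)*(2*(r:ℂ)-(k:ℂ)) - (r:ℂ)*(2*(r:ℂ)-1)) / (16*((r:ℂ)-1))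

/-- The spectral projectors `P_k = Π_{j≠k} (Ĉ − c_j)/(c_k − c_j)`. -/
def Pk (r k : ℕ) : Cl r ⊗[ℂ] Cl r :=
  (((List.range (r+1)).filter (fun j => j ≠ k)).map
    (fun j => (cEv r k - cEv r j)⁻¹ • (sC r - cEv r j • 1))).prod

/-- `P_r^S = (p_{++} + p_{−−})·P_r`. -/
def PrS (r : ℕ) : Cl r ⊗[ℂ] Cl r := (ppCh r 1 1 + ppCh r (-1) (-1)) * Pk r r

/-- The ascending factorial `a_k(u) = (u/2)(u/2+1)⋯(u/2+k−1)`. -/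
def asc (u : ℂ) (k : ℕ) : ℂ := ∏ j ∈ Finset.range k, (u/2 + (j:ℂ))

/-- The `so_{2r}` generators `M_{ij} = (Γ_iΓ_j − Γ_jΓ_i)/4`. -/
def Mgen (r : ℕ) (i j : Fin (2*r)) : Cl r :=
  (4:ℂ)⁻¹ • (Γgen r i * Γgen r j - Γgen r j * Γgen r i)

/-! ### Auxiliary lemmas -/

lemma polar_single (r : ℕ) (a b : Fin (2*r)) :
    QuadraticMap.polar (Qf r) (Pi.single a 1) (Pi.single b 1) = if a = b then 2 else 0 := by
  set u : Fin (2*r) → ℂ := Pi.single a 1 with hu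
  set v : Fin (2*r) → ℂ := Pi.single b 1 with hv
  simp only [QuadraticMap.polar, Qf, QuadraticMap.weightedSumSquares_apply, one_smul, Pi.add_apply]
  have h1 : ∀ x ∈ Finset.univ, (u x + v x) * (u x + v x)
      = u x * u x + v x * v x + 2 * (u x * v x) := fun x _ => by ring
  rw [Finset.sum_congr rfl h1]
  simp only [Finset.sum_add_distrib, ← Finset.mul_sum]
  have h2 : ∀ x ∈ Finset.univ, u x * v x
      = if a = b then (if x = a then (1:ℂ) else 0) else 0 := fun x _ => by
    simp only [hu, hv, Pi.single_apply]
    rcases eq_or_ne x a with rfl | hx <;> rcases eq_or_ne x b with rfl | hy <;>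
      simp_all [Ne.symm]
  rw [Finset.sum_congr rfl h2]
  rcases eq_or_ne a b with rfl | h
  · simp [Finset.sum_ite_eq', hu, hv, Pi.single_apply]
    ring
  · simp [Finset.sum_ite_eq', hu, hv, Pi.single_apply, h]

lemma gamma_anticomm (r : ℕ) (a b : Fin (2*r)) :
    Γgen r a * Γgen r b + Γgen r b * Γgen r a
      = (if a = b then (2:ℂ) else 0) • 1 := by
  rw [Γgen, Γgen, CliffordAlgebra.ι_mul_ι_add_swap, polar_single, Algebra.algebraMap_eq_smul_one]

lemma gamma_swap (r : ℕ) (a b : Fin (2*r)) :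
    Γgen r b * Γgen r a = (if b = a then (2:ℂ) else 0) • 1 - Γgen r a * Γgen r b := by
  rw [eq_sub_iff_add_eq, add_comm, gamma_anticomm]
  congr 1
  simp [eq_comm]

lemma comm_gamma2 (r : ℕ) (i j a : Fin (2*r)) :
    (Γgen r i * Γgen r j) * Γgen r a - Γgen r a * (Γgen r i * Γgen r j)
      = (if j = a then (2:ℂ) else 0) • Γgen r i - (if i = a then (2:ℂ) else 0) • Γgen r j := by
  have h1 : Γgen r j * Γgen r a = (if j = a then (2:ℂ) else 0) • 1 - Γgen r a * Γgen r j :=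
    gamma_swap r a j
  have h2 : Γgen r i * Γgen r a = (if i = a then (2:ℂ) else 0) • 1 - Γgen r a * Γgen r i :=
    gamma_swap r a i
  calc (Γgen r i * Γgen r j) * Γgen r a - Γgen r a * (Γgen r i * Γgen r j)
      = Γgen r i * (Γgen r j * Γgen r a) - Γgen r a * Γgen r i * Γgen r j := by
        rw [mul_assoc, mul_assoc]
    _ = Γgen r i * ((if j = a then (2:ℂ) else 0) • 1 - Γgen r a * Γgen r j)
          - ((if i = a then (2:ℂ) else 0) • 1 - Γgen r i * Γgen r a) * Γgen r j := by
        rw [h1]; rw [eq_sub_iff_add_eq] at h2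
        rw [sub_mul, ← h2]; noncomm_ring
    _ = (if j = a then (2:ℂ) else 0) • Γgen r i - (if i = a then (2:ℂ) else 0) • Γgen r j
          - (Γgen r i * Γgen r a) * Γgen r j + (Γgen r i * Γgen r a) * Γgen r j := by
        rw [mul_sub, sub_mul, mul_smul_comm, smul_mul_assoc, mul_one, one_mul, mul_assoc]
        abel
    _ = _ := by abel

lemma comm_M_gamma (r : ℕ) (i j a : Fin (2*r)) :
    Mgen r i j * Γgen r a - Γgen r a * Mgen r i j
      = (if j = a then (1:ℂ) else 0) • Γgen r i - (if i = a then (1:ℂ) else 0) • Γgen r j := by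
  have key : (Γgen r i * Γgen r j - Γgen r j * Γgen r i) * Γgen r a
      - Γgen r a * (Γgen r i * Γgen r j - Γgen r j * Γgen r i)
    = ((Γgen r i * Γgen r j) * Γgen r a - Γgen r a * (Γgen r i * Γgen r j))
      - ((Γgen r j * Γgen r i) * Γgen r a - Γgen r a * (Γgen r j * Γgen r i)) := by noncomm_ring
  rw [Mgen, smul_mul_assoc, mul_smul_comm, ← smul_sub, key, comm_gamma2, comm_gamma2]
  rw [smul_sub, smul_sub, smul_sub]
  simp only [smul_smul]
  norm_num
  split_ifs <;> simp <;> module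

/-- The ordered products `Γ_{b₁}⋯Γ_{b_k}`. -/
def Pprod (r k : ℕ) (b : Fin k → Fin (2*r)) : Cl r :=
  (List.ofFn fun l => Γgen r (b l)).prod

lemma Pprod_succ (r k : ℕ) (b : Fin (k+1) → Fin (2*r)) :
    Pprod r (k+1) b = Γgen r (b 0) * Pprod r k (b ∘ Fin.succ) := by
  rw [Pprod, List.ofFn_succ, List.prod_cons, Pprod]; rfl

lemma comm_mul (R : Type*) [Ring R] (M x y : R) :
    M * (x * y) - (x * y) * M = (M * x - x * M) * y + x * (M * y - y * M) := by noncomm_ring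

lemma comm_M_Pprod (r : ℕ) (i j : Fin (2*r)) (k : ℕ) (b : Fin k → Fin (2*r)) :
    Mgen r i j * Pprod r k b - Pprod r k b * Mgen r i j
      = ∑ m : Fin k, ((if j = b m then (1:ℂ) else 0) • Pprod r k (Function.update b m i)
          - (if i = b m then (1:ℂ) else 0) • Pprod r k (Function.update b m j)) := by
  induction k with
  | zero => simp [Pprod]
  | succ k ih =>
    rw [Pprod_succ, comm_mul, comm_M_gamma, ih, Fin.sum_univ_succ]
    have h0i : Pprod r (k+1) (Function.update b 0 i)
        = Γgen r i * Pprod r k (b ∘ Fin.succ) := by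
      rw [Pprod_succ, Function.update_self,
        Function.update_comp_eq_of_forall_ne _ _ (fun m => (Fin.succ_ne_zero m))]
    have h0j : Pprod r (k+1) (Function.update b 0 j)
        = Γgen r j * Pprod r k (b ∘ Fin.succ) := by
      rw [Pprod_succ, Function.update_self,
        Function.update_comp_eq_of_forall_ne _ _ (fun m => (Fin.succ_ne_zero m))]
    have hsi : ∀ (m : Fin k) (x : Fin (2*r)), Pprod r (k+1) (Function.update b m.succ x)
        = Γgen r (b 0) * Pprod r k (Function.update (b ∘ Fin.succ) m x) := by
      intro m x
      rw [Pprod_succ, Function.update_of_ne (Fin.succ_ne_zero m).symm,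
        ← Function.update_comp_eq_of_injective _ (Fin.succ_injective k)]
    rw [h0i, h0j]
    simp only [hsi, Function.comp_apply]
    rw [Finset.mul_sum]
    congr 1
    · rw [sub_mul, smul_mul_assoc, smul_mul_assoc]
    · exact Finset.sum_congr rfl fun m _ => by
        rw [mul_sub, mul_smul_comm, mul_smul_comm]

/-- The commutator with `Mgen r i j`, as a linear map. -/
def adM (r : ℕ) (i j : Fin (2*r)) : Cl r →ₗ[ℂ] Cl r :=
  LinearMap.mulLeft ℂ (Mgen r i j) - LinearMap.mulRight ℂ (Mgen r i j)

lemma adM_apply (r : ℕ) (i j : Fin (2*r)) (x : Cl r) :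
    adM r i j x = Mgen r i j * x - x * Mgen r i j := rfl

lemma Γbr_eq (r k : ℕ) (a : Fin k → Fin (2*r)) :
    Γbr r k a = ((k.factorial : ℂ))⁻¹ •
      ∑ σ : Equiv.Perm (Fin k), ((Equiv.Perm.sign σ : ℤ) : ℂ) • Pprod r k (a ∘ σ) := rfl

lemma adM_Γbr (r : ℕ) (i j : Fin (2*r)) (k : ℕ) (a : Fin k → Fin (2*r)) :
    adM r i j (Γbr r k a)
      = ∑ m : Fin k, ((if j = a m then (1:ℂ) else 0) • Γbr r k (Function.update a m i)
          - (if i = a m then (1:ℂ) else 0) • Γbr r k (Function.update a m j)) := by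
  have key : ∀ σ : Equiv.Perm (Fin k),
      adM r i j (Pprod r k (a ∘ σ))
      = ∑ m : Fin k, ((if j = a m then (1:ℂ) else 0) • Pprod r k ((Function.update a m i) ∘ σ)
          - (if i = a m then (1:ℂ) else 0) • Pprod r k ((Function.update a m j) ∘ σ)) := by
    intro σ
    rw [adM_apply, comm_M_Pprod]
    rw [← Equiv.sum_comp σ (fun m => ((if j = a m then (1:ℂ) else 0) •
        Pprod r k ((Function.update a m i) ∘ σ)
          - (if i = a m then (1:ℂ) else 0) • Pprod r k ((Function.update a m j) ∘ σ)))]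
    refine Finset.sum_congr rfl fun m _ => ?_
    rw [Function.update_comp_eq_of_injective _ σ.injective,
        Function.update_comp_eq_of_injective _ σ.injective]
    rfl
  rw [Γbr_eq, map_smul, map_sum]
  simp only [map_smul, key]
  simp only [Γbr_eq]
  simp only [Finset.smul_sum, smul_sub, smul_smul]
  rw [Finset.sum_comm]
  refine Finset.sum_congr rfl fun m _ => ?_
  rw [← Finset.sum_sub_distrib]
  exact Finset.sum_congr rfl fun σ _ => by rw [show ((k.factorial:ℂ))⁻¹ * (((Equiv.Perm.sign σ : ℤ):ℂ) * if j = a m then 1 else 0)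
      = (if j = a m then (1:ℂ) else 0) * (((k.factorial:ℂ))⁻¹ * ((Equiv.Perm.sign σ : ℤ):ℂ)) by ring,
    show ((k.factorial:ℂ))⁻¹ * (((Equiv.Perm.sign σ : ℤ):ℂ) * if i = a m then 1 else 0)
      = (if i = a m then (1:ℂ) else 0) * (((k.factorial:ℂ))⁻¹ * ((Equiv.Perm.sign σ : ℤ):ℂ)) by ring]

lemma swap_sum {N : Type*} [AddCommMonoid N] [Module ℂ N] {r k : ℕ} {i j : Fin (2*r)}
    (hij : i ≠ j) (m : Fin k) (G : (Fin k → Fin (2*r)) → (Fin k → Fin (2*r)) → N) :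
    ∑ a : Fin k → Fin (2*r), (if j = a m then (1:ℂ) else 0) • G (Function.update a m i) a
      = ∑ a : Fin k → Fin (2*r), (if i = a m then (1:ℂ) else 0) • G a (Function.update a m j) := by
  have he : Function.Involutive
      (fun a : Fin k → Fin (2*r) => Function.update a m (Equiv.swap i j (a m))) := by
    intro a
    simp only [Function.update_self, Function.update_idem, Equiv.swap_apply_self,
      Function.update_eq_self]
  refine Fintype.sum_equiv (Function.Involutive.toPerm _ he) _ _ fun a => ?_
  simp only [Function.Involutive.coe_toPerm]
  rcases eq_or_ne (a m) j with hj | hj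
  · have h1 : Equiv.swap i j (a m) = i := by rw [hj, Equiv.swap_apply_right]
    have h2 : Function.update a m j = a := by
      conv_lhs => rw [← hj]
      exact Function.update_eq_self m a
    simp only [h1]
    rw [if_pos hj.symm, Function.update_self, Function.update_idem, h2, if_pos rfl]
  · rcases eq_or_ne (a m) i with hi | hi
    · have h1 : Equiv.swap i j (a m) = j := by rw [hi, Equiv.swap_apply_left]
      simp only [h1]
      rw [if_neg (show ¬ j = a m from fun h => hj h.symm), Function.update_self,
        if_neg hij, zero_smul, zero_smul]
    · have h1 : Equiv.swap i j (a m) = a m := Equiv.swap_apply_of_ne_of_ne hi hj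
      simp only [h1]
      rw [Function.update_eq_self, if_neg (show ¬ j = a m from fun h => hj h.symm),
        if_neg (show ¬ i = a m from fun h => hi h.symm), zero_smul, zero_smul]

/-- each invariant `I_k` commutes with `M_{ij} ⊗ 1 + 1 ⊗ M_{ij}`. -/
theorem Ik_invariant (r : ℕ) (hr : 2 ≤ r) (i j : Fin (2*r)) (k : ℕ) :
    ((Mgen r i j) ⊗ₜ[ℂ] (1 : Cl r) + (1 : Cl r) ⊗ₜ[ℂ] (Mgen r i j)) * Ik r k
      = Ik r k * ((Mgen r i j) ⊗ₜ[ℂ] (1 : Cl r) + (1 : Cl r) ⊗ₜ[ℂ] (Mgen r i j)) := by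
  rcases eq_or_ne i j with rfl | hij
  · have hM : Mgen r i i = 0 := by simp [Mgen]
    rw [hM]
    simp
  · rw [← sub_eq_zero]
    have expand : ∀ a : Fin k → Fin (2*r),
        ((Mgen r i j) ⊗ₜ[ℂ] (1 : Cl r) + (1 : Cl r) ⊗ₜ[ℂ] (Mgen r i j))
            * (Γbr r k a ⊗ₜ[ℂ] Γbr r k a)
          - (Γbr r k a ⊗ₜ[ℂ] Γbr r k a)
            * ((Mgen r i j) ⊗ₜ[ℂ] (1 : Cl r) + (1 : Cl r) ⊗ₜ[ℂ] (Mgen r i j))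
        = (adM r i j (Γbr r k a)) ⊗ₜ[ℂ] Γbr r k a
            + Γbr r k a ⊗ₜ[ℂ] (adM r i j (Γbr r k a)) := by
      intro a
      rw [adM_apply]
      simp only [add_mul, mul_add, Algebra.TensorProduct.tmul_mul_tmul, one_mul, mul_one,
        TensorProduct.sub_tmul, TensorProduct.tmul_sub]
      abel
    rw [Ik, Finset.mul_sum, Finset.sum_mul, ← Finset.sum_sub_distrib]
    rw [Finset.sum_congr rfl fun a _ => expand a]
    simp only [adM_Γbr]
    simp only [TensorProduct.sum_tmul, TensorProduct.tmul_sum, TensorProduct.sub_tmul,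
      TensorProduct.tmul_sub, TensorProduct.smul_tmul', TensorProduct.tmul_smul]
    simp only [← Finset.sum_add_distrib]
    rw [Finset.sum_comm]
    refine Finset.sum_eq_zero fun m _ => ?_
    have hA := swap_sum hij m (fun x y => Γbr r k x ⊗ₜ[ℂ] Γbr r k y)
    have hC := swap_sum hij m (fun x y => Γbr r k y ⊗ₜ[ℂ] Γbr r k x)
    simp only [TensorProduct.smul_tmul'] at hA hC
    rw [Finset.sum_add_distrib, Finset.sum_sub_distrib, Finset.sum_sub_distrib, hA, hC]
    abel

end
end

section
/- For every integer k ≥ 1 the following recurrence holds in Cl ⊗ Cl: I_{2k}·I_2 = I_{2k+2} + 8k(r−k)·I_{2k} + 4k(2k−1)(r+1−k)(2r+1−2k)·I_{2k−2}. -/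
open scoped TensorProduct

noncomputable section

/-!
The antisymmetrised product `Γ_{[i₁…i_m]}` vanishes unless the indices are distinct, and is then
`±Γ_S` for the monomial `Γ_S` of `S = {i₁, …, i_m}`; hence `I_m = m! ∑_{|S| = m} Γ_S ⊗ Γ_S`.
Since `Γ_S Γ_T = ±Γ_{S ∆ T}`, the sign cancels in `(Γ_S ⊗ Γ_S)(Γ_T ⊗ Γ_T) = Γ_{S∆T} ⊗ Γ_{S∆T}`,
so `I_{2k} I_2` is `(2k)! 2!` times a sum of `Γ_U ⊗ Γ_U` over `U = S ∆ T`, `|S| = 2k`, `|T| = 2`.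
For `|S ∩ T| = 0, 1, 2` we get `|U| = 2k + 2, 2k, 2k - 2`, and `S = U ∆ T` is recovered from `T`,
which ranges over the pairs inside `U`, the pairs meeting `U` once, or the pairs outside `U`:
`C(|U|, 2)`, `|U| (2r - |U|)` and `C(2r - |U|, 2)` choices respectively.
-/

open Finset

section

variable {A : Type*}

def EqUpToSign [Neg A] (x y : A) : Prop := x = y ∨ x = -y

infix:50 " =± " => EqUpToSign

namespace EqUpToSign

theorem refl [Neg A] (x : A) : x =± x := .inl rfl

theorem symm [InvolutiveNeg A] {x y : A} : x =± y → y =± x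
  | .inl h => .inl h.symm
  | .inr h => .inr (by rw [h, neg_neg])

theorem trans [InvolutiveNeg A] {x y z : A} : x =± y → y =± z → x =± z
  | .inl h, h' => h ▸ h'
  | .inr h, .inl h' => .inr (h' ▸ h)
  | .inr h, .inr h' => .inl (by rw [h, h', neg_neg])

instance [InvolutiveNeg A] : @Trans A A A EqUpToSign EqUpToSign EqUpToSign := ⟨trans⟩

theorem mul [Mul A] [HasDistribNeg A] {x y x' y' : A} (h : x =± y) (h' : x' =± y') :
    x * x' =± y * y' := by
  rcases h with rfl | rfl <;> rcases h' with rfl | rfl <;> simp [EqUpToSign]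

theorem tmul_self {R M : Type*} [CommSemiring R] [AddCommGroup M] [Module R M] {x y : M}
    (h : x =± y) : x ⊗ₜ[R] x = y ⊗ₜ[R] y := by
  rcases h with rfl | rfl <;> simp [TensorProduct.neg_tmul, TensorProduct.tmul_neg]

end EqUpToSign

end

section SignedProducts

variable {A : Type*} [Monoid A] [HasDistribNeg A] {ι : Type*} {e : ι → A}

theorem prod_map_eqUpToSign_of_perm (he : ∀ i j, e i * e j =± e j * e i) {l₁ l₂ : List ι}
    (h : l₁.Perm l₂) : (l₁.map e).prod =± (l₂.map e).prod := by
  induction h with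
  | nil => exact .refl _
  | cons x _ ih => simpa using (EqUpToSign.refl (e x)).mul ih
  | swap x y l => simpa [← mul_assoc] using (he y x).mul (.refl _)
  | trans _ _ ih₁ ih₂ => exact ih₁.trans ih₂

theorem mul_prod_map_eqUpToSign (he : ∀ i j, e i * e j =± e j * e i) (i : ι) (l : List ι) :
    e i * (l.map e).prod =± (l.map e).prod * e i := by
  induction l with
  | nil => simpa using .refl _
  | cons j l ih =>
    calc e i * ((j :: l).map e).prod = e i * e j * (l.map e).prod := by simp [mul_assoc]
      _ =± e j * e i * (l.map e).prod := (he i j).mul (.refl _)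
      _ = e j * (e i * (l.map e).prod) := mul_assoc ..
      _ =± e j * ((l.map e).prod * e i) := (EqUpToSign.refl _).mul ih
      _ = ((j :: l).map e).prod * e i := by simp [mul_assoc]

theorem prod_map_mul_self_eqUpToSign_one (he : ∀ i j, e i * e j =± e j * e i)
    (he_sq : ∀ i, e i * e i = 1) (l : List ι) :
    (l.map e).prod * (l.map e).prod =± 1 := by
  induction l with
  | nil => simpa using .refl _
  | cons i l ih =>
    calc ((i :: l).map e).prod * ((i :: l).map e).prod
        = e i * ((l.map e).prod * e i) * (l.map e).prod := by simp [mul_assoc]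
      _ =± e i * (e i * (l.map e).prod) * (l.map e).prod :=
          ((EqUpToSign.refl _).mul (mul_prod_map_eqUpToSign he i l).symm).mul (.refl _)
      _ = (l.map e).prod * (l.map e).prod := by rw [← mul_assoc, he_sq, one_mul]
      _ =± 1 := ih

variable (e) in
/-- `S.toList` lists `S` in an unspecified order; for the families used here any other order
changes the product only by a sign. -/
def monomialProd (S : Finset ι) : A := (S.toList.map e).prod

theorem prod_ofFn_eqUpToSign_monomialProd [DecidableEq ι] (he : ∀ i j, e i * e j =± e j * e i)
    {m : ℕ} {g : Fin m → ι} (hg : Function.Injective g) :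
    (List.ofFn (e ∘ g)).prod =± monomialProd e (univ.image g) := by
  rw [← List.map_ofFn]
  refine prod_map_eqUpToSign_of_perm he (List.perm_of_nodup_nodup_toFinset_eq
    (List.nodup_ofFn.mpr hg) (nodup_toList _) ?_)
  ext; simp

theorem monomialProd_mul_eqUpToSign [DecidableEq ι] (he : ∀ i j, e i * e j =± e j * e i)
    (he_sq : ∀ i, e i * e i = 1) (S T : Finset ι) :
    monomialProd e S * monomialProd e T =± monomialProd e (symmDiff S T) := by
  have hperm : (S.toList ++ T.toList).Perm
      ((S ∩ T).toList ++ (S ∩ T).toList ++ (symmDiff S T).toList) := by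
    rw [← Multiset.coe_eq_coe, ← Multiset.coe_add, ← Multiset.coe_add, ← Multiset.coe_add]
    simp only [coe_toList]
    ext a
    simp only [Multiset.count_add, Multiset.count_eq_of_nodup (Finset.nodup _), ← Finset.mem_def,
      mem_inter, mem_symmDiff]
    by_cases a ∈ S <;> by_cases a ∈ T <;> simp [*]
  calc monomialProd e S * monomialProd e T = ((S.toList ++ T.toList).map e).prod := by
        simp [monomialProd]
    _ =± (((S ∩ T).toList ++ (S ∩ T).toList ++ (symmDiff S T).toList).map e).prod :=
        prod_map_eqUpToSign_of_perm he hperm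
    _ = monomialProd e (S ∩ T) * monomialProd e (S ∩ T) * monomialProd e (symmDiff S T) := by
        simp [monomialProd, mul_assoc]
    _ =± 1 * monomialProd e (symmDiff S T) :=
        (prod_map_mul_self_eqUpToSign_one he he_sq _).mul (.refl _)
    _ = monomialProd e (symmDiff S T) := one_mul _

end SignedProducts

section MonomialTmul

variable (R : Type*) {A ι : Type*} [CommSemiring R] [Ring A] [Algebra R A]

def monomialTmul (e : ι → A) (S : Finset ι) : A ⊗[R] A := monomialProd e S ⊗ₜ[R] monomialProd e S

variable {R} [DecidableEq ι] {e : ι → A}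

theorem monomialTmul_mul (he : ∀ i j, e i * e j =± e j * e i) (he_sq : ∀ i, e i * e i = 1)
    (S T : Finset ι) :
    monomialTmul R e S * monomialTmul R e T = monomialTmul R e (symmDiff S T) := by
  rw [monomialTmul, monomialTmul, Algebra.TensorProduct.tmul_mul_tmul]
  exact (monomialProd_mul_eqUpToSign he he_sq S T).tmul_self

end MonomialTmul

section Anticommuting

variable {A : Type*} [Ring A]

theorem prod_ofFn_comp_swap_castSucc_succ {n : ℕ} (f : Fin (n + 1) → A) (i : Fin n)
    (hf : f i.castSucc * f i.succ = -(f i.succ * f i.castSucc)) :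
    (List.ofFn (f ∘ Equiv.swap i.castSucc i.succ)).prod = -(List.ofFn f).prod := by
  induction n with
  | zero => exact i.elim0
  | succ n ih =>
    cases i using Fin.cases with
    | zero =>
      have hswap : ∀ j : Fin n, Equiv.swap 0 1 j.succ.succ = j.succ.succ := fun j =>
        Equiv.swap_apply_of_ne_of_ne (Fin.succ_ne_zero _)
          ((Fin.succ_injective _).ne (Fin.succ_ne_zero j))
      simp only [Fin.castSucc_zero, Fin.succ_zero_eq_one] at hf
      simp [List.ofFn_succ, hswap, ← mul_assoc, hf]
    | succ i =>
      have h0 : Equiv.swap i.castSucc.succ i.succ.succ 0 = 0 :=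
        Equiv.swap_apply_of_ne_of_ne (Fin.succ_ne_zero _).symm (Fin.succ_ne_zero _).symm
      have hswap : ∀ j : Fin (n + 1),
          Equiv.swap i.castSucc.succ i.succ.succ j.succ = (Equiv.swap i.castSucc i.succ j).succ :=
        fun j => (Fin.succ_injective _).swap_apply _ _ _
      have := ih (fun j => f j.succ) i hf
      simp_all

theorem prod_ofFn_comp_perm {n : ℕ} (f : Fin n → A)
    (hf : Pairwise fun i j => f i * f j = -(f j * f i)) (σ : Equiv.Perm (Fin n)) :
    (List.ofFn (f ∘ σ)).prod = (Equiv.Perm.sign σ : ℤ) • (List.ofFn f).prod := by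
  cases n with
  | zero => simp [Subsingleton.elim σ 1]
  | succ n =>
    have hσ : σ ∈ Submonoid.closure (Set.range fun i : Fin n => Equiv.swap i.castSucc i.succ) := by
      rw [Equiv.Perm.mclosure_swap_castSucc_succ]; trivial
    induction hσ using Submonoid.closure_induction generalizing f with
    | mem _ h =>
      obtain ⟨i, rfl⟩ := h
      rw [prod_ofFn_comp_swap_castSucc_succ f i (hf (Fin.castSucc_lt_succ (i := i)).ne),
        Equiv.Perm.sign_swap (Fin.castSucc_lt_succ (i := i)).ne]
      simp
    | one => simp
    | mul σ τ _ _ ihσ ihτ =>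
      rw [Equiv.Perm.coe_mul, ← Function.comp_assoc, ihτ (f ∘ σ) (hf.comp_of_injective σ.injective),
        ihσ f hf, smul_smul, Equiv.Perm.sign_mul, Units.val_mul, mul_comm]

end Anticommuting

theorem Nat.add_choose_two (a b : ℕ) : (a + b).choose 2 = a.choose 2 + a * b + b.choose 2 := by
  induction b with
  | zero => simp
  | succ b ih =>
    rw [← add_assoc, Nat.choose_succ_succ', ih, Nat.choose_succ_succ' b, Nat.choose_one_right,
      Nat.choose_one_right]
    ring

section Counting

variable {α : Type*} [DecidableEq α]

theorem card_symmDiff_add_two_mul_card_inter (S T : Finset α) :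
    #(symmDiff S T) + 2 * #(S ∩ T) = #S + #T := by
  have h₁ := card_union_add_card_inter S T
  have h₂ := card_union_of_disjoint (disjoint_symmDiff_inf (a := S) (b := T))
  have h₃ : symmDiff S T ∪ S ∩ T = S ∪ T := symmDiff_sup_inf S T
  simp only [inf_eq_inter, h₃] at h₂
  omega

theorem card_symmDiff_inter_add_card_inter (S T : Finset α) :
    #(symmDiff S T ∩ T) + #(S ∩ T) = #T := by
  have h : symmDiff S T ∩ T = T \ S := by
    ext; simp only [mem_inter, mem_symmDiff, mem_sdiff]; tauto
  rw [h, inter_comm, card_sdiff_add_card_inter]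

variable [Fintype α]

theorem card_filter_injective_image_eq (S : Finset α) {m : ℕ} (hS : #S = m) :
    #{g : Fin m → α | Function.Injective g ∧ univ.image g = S} = m.factorial := by
  obtain ⟨e⟩ : Nonempty (Fin m ≃ S) := ⟨(S.equivFinOfCardEq hS).symm⟩
  have hinj : Function.Injective fun σ : Equiv.Perm (Fin m) => Subtype.val ∘ e ∘ σ :=
    fun σ τ h => Equiv.ext fun j => e.injective (Subtype.val_injective (congrFun h j))
  suffices h : ({g : Fin m → α | Function.Injective g ∧ univ.image g = S} : Finset _)
      = univ.image fun σ : Equiv.Perm (Fin m) => Subtype.val ∘ e ∘ σ by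
    rw [h, card_image_of_injective _ hinj, card_univ, Fintype.card_perm, Fintype.card_fin]
  ext g
  simp only [mem_filter, mem_univ, true_and, mem_image]
  constructor
  · rintro ⟨hg, rfl⟩
    have hmem : ∀ j, g j ∈ univ.image g := fun j => mem_image_of_mem g (mem_univ j)
    have hginj : Function.Injective fun j => e.symm ⟨g j, hmem j⟩ := fun i j h =>
      hg (congrArg Subtype.val (e.symm.injective h))
    exact ⟨Equiv.ofBijective _ hginj.bijective_of_finite, funext fun j => by simp⟩
  · rintro ⟨σ, rfl⟩
    refine ⟨Subtype.val_injective.comp (e.injective.comp σ.injective), ?_⟩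
    ext x
    simp only [mem_image, mem_univ, true_and, Function.comp_apply]
    exact ⟨fun ⟨j, hj⟩ => hj ▸ (e (σ j)).2, fun hx => ⟨σ.symm (e.symm ⟨x, hx⟩), by simp⟩⟩

theorem filter_card_inter_eq_self (U : Finset α) (t : ℕ) :
    {T ∈ powersetCard t (univ : Finset α) | #(U ∩ T) = t} = powersetCard t U := by
  ext T
  simp only [mem_filter, mem_powersetCard, subset_univ, true_and]
  constructor
  · rintro ⟨hT, hUT⟩
    exact ⟨inter_eq_right.1 (eq_of_subset_of_card_le inter_subset_right (by omega)), hT⟩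
  · rintro ⟨hTU, hT⟩
    rw [inter_eq_right.2 hTU, hT]
    exact ⟨rfl, rfl⟩

theorem filter_card_inter_eq_zero (U : Finset α) (t : ℕ) :
    {T ∈ powersetCard t (univ : Finset α) | #(U ∩ T) = 0} = powersetCard t Uᶜ := by
  ext T
  simp only [card_eq_zero, ← disjoint_iff_inter_eq_empty, mem_filter, mem_powersetCard,
    subset_univ, true_and, and_comm, subset_compl_iff_disjoint_left]

theorem card_filter_card_inter_eq_one (U : Finset α) :
    #{T ∈ powersetCard 2 (univ : Finset α) | #(U ∩ T) = 1} = #U * #Uᶜ := by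
  -- the pairs meeting `U` once are what is left of all `C(#U + #Uᶜ, 2)` pairs once those inside
  -- `U` and those inside `Uᶜ` are removed
  have hsplit := card_eq_sum_card_fiberwise (s := powersetCard 2 univ) (t := range 3)
    (f := fun T => #(U ∩ T)) fun T hT => mem_range.2 (Nat.lt_succ_of_le
      ((card_le_card inter_subset_right).trans (mem_powersetCard.1 hT).2.le))
  simp only [sum_range_succ, sum_range_zero, zero_add, filter_card_inter_eq_zero,
    filter_card_inter_eq_self, card_powersetCard, card_univ, ← card_add_card_compl U,
    Nat.add_choose_two] at hsplit
  omega

variable {M : Type*} [AddCommMonoid M]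

theorem sum_powersetCard_sum_filter_symmDiff (F : Finset α → M) {s t j u i : ℕ}
    (hu : u + 2 * j = s + t) (hi : i + j = t) :
    ∑ S ∈ powersetCard s univ, ∑ T ∈ powersetCard t univ with #(S ∩ T) = j, F (symmDiff S T)
      = ∑ U ∈ powersetCard u univ, #{T ∈ powersetCard t univ | #(U ∩ T) = i} • F U := by
  simp_rw [← sum_const]
  rw [sum_comm' (t' := powersetCard t univ)
      (s' := fun T => {S ∈ powersetCard s univ | #(S ∩ T) = j}) fun _ _ => by
        simp only [mem_filter, mem_powersetCard, subset_univ, true_and]; tauto]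
  conv_rhs => rw [sum_comm' (t' := powersetCard t univ)
      (s' := fun T => {U ∈ powersetCard u univ | #(U ∩ T) = i}) fun _ _ => by
        simp only [mem_filter, mem_powersetCard, subset_univ, true_and]; tauto]
  refine sum_congr rfl fun T hT => ?_
  have hT : #T = t := (mem_powersetCard.1 hT).2
  refine sum_nbij' (symmDiff · T) (symmDiff · T) ?_ ?_
    (fun S _ => symmDiff_symmDiff_cancel_right ..) (fun U _ => symmDiff_symmDiff_cancel_right ..)
    fun _ _ => rfl
  · intro S hS
    simp only [mem_filter, mem_powersetCard, subset_univ, true_and] at hS ⊢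
    have := card_symmDiff_add_two_mul_card_inter S T
    have := card_symmDiff_inter_add_card_inter S T
    omega
  · intro U hU
    simp only [mem_filter, mem_powersetCard, subset_univ, true_and] at hU ⊢
    have := card_symmDiff_add_two_mul_card_inter U T
    have := card_symmDiff_inter_add_card_inter U T
    omega

theorem sum_powersetCard_sum_powersetCard_two_symmDiff (F : Finset α → M) {s : ℕ} (hs : 2 ≤ s) :
    ∑ S ∈ powersetCard s univ, ∑ T ∈ powersetCard 2 univ, F (symmDiff S T)
      = ∑ U ∈ powersetCard (s + 2) univ, (#U).choose 2 • F U
        + ∑ U ∈ powersetCard s univ, (#U * #Uᶜ) • F U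
        + ∑ U ∈ powersetCard (s - 2) univ, (#Uᶜ).choose 2 • F U := by
  have hsplit : ∀ S : Finset α, ∑ T ∈ powersetCard 2 univ, F (symmDiff S T)
      = ∑ j ∈ range 3, ∑ T ∈ powersetCard 2 univ with #(S ∩ T) = j, F (symmDiff S T) :=
    fun S => (sum_fiberwise_of_maps_to (fun T hT => mem_range.2 (Nat.lt_succ_of_le
      ((card_le_card inter_subset_right).trans (mem_powersetCard.1 hT).2.le))) _).symm
  rw [sum_congr rfl fun S _ => hsplit S, sum_comm, sum_range_succ, sum_range_succ, sum_range_one,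
    sum_powersetCard_sum_filter_symmDiff F (u := s + 2) (i := 2) (by omega) (by omega),
    sum_powersetCard_sum_filter_symmDiff F (u := s) (i := 1) (by omega) (by omega),
    sum_powersetCard_sum_filter_symmDiff F (u := s - 2) (i := 0) (by omega) (by omega)]
  simp only [filter_card_inter_eq_self, filter_card_inter_eq_zero, card_filter_card_inter_eq_one,
    card_powersetCard]

end Counting

theorem nsmul_sum_nsmul_eq_smul_nsmul_sum {R M ι : Type*} [Semiring R] [AddCommMonoid M]
    [Module R M] {s : Finset ι} {f : ι → M} {c : ι → ℕ} {a b : ℕ} {z : R}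
    (h : ∀ x ∈ s, (a : R) * c x = z * b) :
    a • ∑ x ∈ s, c x • f x = z • b • ∑ x ∈ s, f x := by
  simp only [smul_sum, ← Nat.cast_smul_eq_nsmul R, smul_smul]
  exact sum_congr rfl fun x hx => by rw [h x hx]

theorem Qf_single (r : ℕ) (i : Fin (2 * r)) : Qf r (Pi.single i 1) = 1 := by
  simp [Qf, QuadraticMap.weightedSumSquares_apply, Pi.single_apply]

theorem Γgen_mul_self (r : ℕ) (i : Fin (2 * r)) : Γgen r i * Γgen r i = 1 := by
  rw [Γgen, CliffordAlgebra.ι_sq_scalar, Qf_single, map_one]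

theorem Γgen_mul_Γgen_of_ne (r : ℕ) {i j : Fin (2 * r)} (h : i ≠ j) :
    Γgen r i * Γgen r j = -(Γgen r j * Γgen r i) := by
  refine CliffordAlgebra.ι_mul_ι_comm_of_isOrtho ?_
  simp [QuadraticMap.isOrtho_def, Qf, QuadraticMap.weightedSumSquares_apply, Pi.single_apply,
    Finset.sum_add_distrib, mul_add, h, h.symm]

theorem Γgen_mul_comm_eqUpToSign (r : ℕ) (i j : Fin (2 * r)) :
    Γgen r i * Γgen r j =± Γgen r j * Γgen r i := by
  obtain rfl | h := eq_or_ne i j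
  · exact .refl _
  · exact .inr (Γgen_mul_Γgen_of_ne r h)

theorem Γbr_comp_perm (r m : ℕ) (g : Fin m → Fin (2 * r)) (τ : Equiv.Perm (Fin m)) :
    Γbr r m (g ∘ τ) = ((Equiv.Perm.sign τ : ℤ) : ℂ) • Γbr r m g := by
  rw [Γbr, Γbr, smul_comm ((Equiv.Perm.sign τ : ℤ) : ℂ)]
  congr 1
  rw [Finset.smul_sum]
  refine Fintype.sum_equiv (M := Cl r) (Equiv.mulLeft τ) _ _ fun σ => ?_
  simp only [Equiv.coe_mulLeft, Equiv.Perm.mul_apply, Equiv.Perm.sign_mul, Units.val_mul,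
    Int.cast_mul, smul_smul, ← mul_assoc, Function.comp_apply]
  rw [← Int.cast_mul, ← Units.val_mul, Int.units_mul_self, Units.val_one, Int.cast_one, one_mul]

theorem Γbr_eq_zero_of_not_injective (r m : ℕ) {g : Fin m → Fin (2 * r)}
    (hg : ¬Function.Injective g) : Γbr r m g = 0 := by
  obtain ⟨a, b, hab, hne⟩ : ∃ a b, g a = g b ∧ a ≠ b := by
    simpa [Function.Injective] using hg
  have hswap : g ∘ Equiv.swap a b = g := by
    ext x
    simp only [Function.comp_apply, Equiv.swap_apply_def]
    split_ifs <;> simp_all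
  have := Γbr_comp_perm r m g (Equiv.swap a b)
  rw [hswap, Equiv.Perm.sign_swap hne, Units.val_neg, Units.val_one, Int.cast_neg, Int.cast_one,
    neg_one_smul, eq_neg_iff_add_eq_zero, ← two_smul ℂ, smul_eq_zero] at this
  exact this.resolve_left two_ne_zero

theorem Γbr_eq_prod_of_injective (r m : ℕ) {g : Fin m → Fin (2 * r)}
    (hg : Function.Injective g) : Γbr r m g = (List.ofFn (Γgen r ∘ g)).prod := by
  have hanti : Pairwise fun i j =>
      (Γgen r ∘ g) i * (Γgen r ∘ g) j = -((Γgen r ∘ g) j * (Γgen r ∘ g) i) :=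
    fun i j h => Γgen_mul_Γgen_of_ne r (hg.ne h)
  have hterm : ∀ σ : Equiv.Perm (Fin m),
      ((Equiv.Perm.sign σ : ℤ) : ℂ) • (List.ofFn fun j => Γgen r (g (σ j))).prod
        = (List.ofFn (Γgen r ∘ g)).prod := fun σ => by
    rw [show (List.ofFn fun j => Γgen r (g (σ j))) = List.ofFn ((Γgen r ∘ g) ∘ σ) from rfl,
      prod_ofFn_comp_perm _ hanti, Int.cast_smul_eq_zsmul, smul_smul, ← Units.val_mul,
      Int.units_mul_self, Units.val_one, one_smul]
  rw [Γbr, Fintype.sum_congr _ _ hterm, Finset.sum_const, Finset.card_univ, Fintype.card_perm,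
    Fintype.card_fin, ← Nat.cast_smul_eq_nsmul ℂ, smul_smul,
    inv_mul_cancel₀ (Nat.cast_ne_zero.mpr m.factorial_ne_zero), one_smul]

theorem Γbr_tmul_self_of_injective (r m : ℕ) {g : Fin m → Fin (2 * r)}
    (hg : Function.Injective g) :
    Γbr r m g ⊗ₜ[ℂ] Γbr r m g = monomialTmul ℂ (Γgen r) (univ.image g) := by
  rw [Γbr_eq_prod_of_injective r m hg]
  exact (prod_ofFn_eqUpToSign_monomialProd (Γgen_mul_comm_eqUpToSign r) hg).tmul_self

theorem Ik_eq_sum_powersetCard (r m : ℕ) :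
    Ik r m = m.factorial • ∑ S ∈ powersetCard m univ, monomialTmul ℂ (Γgen r) S := by
  have hterm : ∀ g : Fin m → Fin (2 * r), Γbr r m g ⊗ₜ[ℂ] Γbr r m g
      = if Function.Injective g then monomialTmul ℂ (Γgen r) (univ.image g) else 0 := by
    intro g
    split_ifs with hg
    · exact Γbr_tmul_self_of_injective r m hg
    · rw [Γbr_eq_zero_of_not_injective r m hg, TensorProduct.zero_tmul]
  have hmaps : ∀ g ∈ ({g | Function.Injective g} : Finset (Fin m → Fin (2 * r))),
      univ.image g ∈ powersetCard m univ := fun g hg => mem_powersetCard.2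
    ⟨subset_univ _, by rw [card_image_of_injective _ (mem_filter.1 hg).2, card_univ,
      Fintype.card_fin]⟩
  rw [Ik, Fintype.sum_congr _ _ hterm, ← sum_filter, ← sum_fiberwise_of_maps_to hmaps, smul_sum]
  refine sum_congr rfl fun S hS => ?_
  rw [sum_congr rfl fun g hg => congrArg _ (mem_filter.1 hg).2, sum_const, filter_filter,
    card_filter_injective_image_eq S (mem_powersetCard.1 hS).2]

theorem Ik_mul_Ik_two (r : ℕ) {s : ℕ} (hs : 2 ≤ s) :
    Ik r s * Ik r 2 = (s.factorial * 2) •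
      (∑ U ∈ powersetCard (s + 2) univ, (#U).choose 2 • monomialTmul ℂ (Γgen r) U
        + ∑ U ∈ powersetCard s univ, (#U * #Uᶜ) • monomialTmul ℂ (Γgen r) U
        + ∑ U ∈ powersetCard (s - 2) univ, (#Uᶜ).choose 2 • monomialTmul ℂ (Γgen r) U) := by
  rw [Ik_eq_sum_powersetCard, Ik_eq_sum_powersetCard, smul_mul_smul_comm, Nat.factorial_two,
    sum_mul_sum, ← sum_powersetCard_sum_powersetCard_two_symmDiff _ hs]
  simp only [monomialTmul_mul (Γgen_mul_comm_eqUpToSign r) (Γgen_mul_self r)]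

theorem Ik_recurrence_general (r : ℕ) (k : ℕ) (hk : 1 ≤ k) :
    Ik r (2*k) * Ik r 2
      = Ik r (2*k+2)
        + ((8:ℂ)*(k:ℂ)*((r:ℂ)-(k:ℂ))) • Ik r (2*k)
        + ((4:ℂ)*(k:ℂ)*(2*(k:ℂ)-1)*((r:ℂ)+1-(k:ℂ))*(2*(r:ℂ)+1-2*(k:ℂ))) • Ik r (2*k-2) := by
  have hcompl : ∀ U : Finset (Fin (2 * r)), (#Uᶜ : ℂ) = 2 * r - #U := fun U => by
    rw [eq_sub_iff_add_eq, add_comm, ← Nat.cast_add, card_add_card_compl, Fintype.card_fin]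
    push_cast; ring
  have hfac₂ : ((2 * k + 2).factorial : ℂ) = (2 * k + 2) * (2 * k + 1) * (2 * k).factorial := by
    push_cast [Nat.factorial_succ]; ring
  have hfac₀ : ((2 * k).factorial : ℂ) = 2 * k * (2 * k - 1) * (2 * k - 2).factorial := by
    obtain ⟨k, rfl⟩ : ∃ k', k = k' + 1 := ⟨k - 1, by omega⟩
    push_cast [show 2 * (k + 1) - 2 = 2 * k by omega, show 2 * (k + 1) = 2 * k + 1 + 1 by ring,
      Nat.factorial_succ]
    ring
  rw [Ik_mul_Ik_two r (by omega), Ik_eq_sum_powersetCard r (2 * k + 2),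
    Ik_eq_sum_powersetCard r (2 * k), Ik_eq_sum_powersetCard r (2 * k - 2), smul_add, smul_add,
    ← one_smul ℂ ((2 * k + 2).factorial • _)]
  refine congr_arg₂ (· + ·) (congr_arg₂ (· + ·) ?_ ?_) ?_ <;>
    refine nsmul_sum_nsmul_eq_smul_nsmul_sum fun U hU => ?_ <;>
    have hU := (mem_powersetCard.1 hU).2
  · rw [hU, Nat.cast_choose_two, hfac₂]; push_cast; ring
  · push_cast; rw [hcompl, hU]; push_cast; ring
  · push_cast; rw [Nat.cast_choose_two, hcompl, hU, hfac₀, Nat.cast_sub (by omega)]; push_cast; ring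

/-- the recurrence
`I_{2k}·I₂ = I_{2k+2} + 8k(r−k)·I_{2k} + 4k(2k−1)(r+1−k)(2r+1−2k)·I_{2k−2}`. -/
theorem Ik_recurrence (r : ℕ) (hr : 2 ≤ r) (k : ℕ) (hk : 1 ≤ k) :
    Ik r (2*k) * Ik r 2
      = Ik r (2*k+2)
        + ((8:ℂ)*(k:ℂ)*((r:ℂ)-(k:ℂ))) • Ik r (2*k)
        + ((4:ℂ)*(k:ℂ)*(2*(k:ℂ)-1)*((r:ℂ)+1-(k:ℂ))*(2*(r:ℂ)+1-2*(k:ℂ))) • Ik r (2*k-2) :=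
  Ik_recurrence_general r k hk

end
end
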